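/- arXiv:1904.03623 — 2 statements merged into one kernel-verified Lean document; each statement's English description precedes it below -/
import Mathlib

section
/- Let (X, μ) be a finite measure space and u1, u2 : X → ℝ measurable functions. Define the kinetic functions ρ_i(z, ξ) := indicator of {u_i(z) > ξ} for i = 1, 2, and set ρ := (ρ1 + ρ2)/2. Then for every z ∈ X, ∫_ℝ (ρ(z,ξ) − ρ(z,ξ)²) dξ = (1/4)|u1(z) − u2(z)|. -/
/-!
Since `ρ₁, ρ₂` take values in `{0, 1}`, pointwise `ρ - ρ² = |ρ₁ - ρ₂| / 4`, and
`|𝟙_{u₁ > ξ} - 𝟙_{u₂ > ξ}|` is the indicator of the interval between `u₁` and `u₂`.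
-/

open MeasureTheory

noncomputable def kinetic (u ξ : ℝ) : ℝ := if ξ < u then 1 else 0

lemma kinetic_mem_zero_one (u ξ : ℝ) : kinetic u ξ = 0 ∨ kinetic u ξ = 1 := by
  unfold kinetic
  split_ifs <;> simp

lemma abs_kinetic_sub_kinetic (a b ξ : ℝ) :
    |kinetic a ξ - kinetic b ξ| = (Set.Ico (min a b) (max a b)).indicator 1 ξ := by
  unfold kinetic
  by_cases hξ : ξ ∈ Set.Ico (min a b) (max a b)
  · rw [Set.indicator_of_mem hξ]
    rw [Set.mem_Ico, min_le_iff, lt_max_iff] at hξ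
    split_ifs <;> norm_num <;> grind
  · rw [Set.indicator_of_notMem hξ]
    rw [Set.mem_Ico, min_le_iff, lt_max_iff] at hξ
    split_ifs <;> norm_num <;> grind

theorem integral_abs_kinetic_sub_kinetic (a b : ℝ) :
    ∫ ξ, |kinetic a ξ - kinetic b ξ| = |a - b| := by
  simp_rw [abs_kinetic_sub_kinetic]
  rw [integral_indicator_one measurableSet_Ico, Real.volume_real_Ico_of_le min_le_max,
    max_sub_min_eq_abs, abs_sub_comm]

lemma half_add_sub_sq_half_add {x y : ℝ} (hx : x = 0 ∨ x = 1) (hy : y = 0 ∨ y = 1) :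
    (x + y) / 2 - ((x + y) / 2) ^ 2 = |x - y| / 4 := by
  rcases hx with rfl | rfl <;> rcases hy with rfl | rfl <;> norm_num

theorem kinetic_average_defect_general
    {X : Type*}
    (u₁ u₂ : X → ℝ)
    (ρ₁ ρ₂ ρ : X → ℝ → ℝ)
    (hρ₁ : ∀ z ξ, ρ₁ z ξ = if ξ < u₁ z then 1 else 0)
    (hρ₂ : ∀ z ξ, ρ₂ z ξ = if ξ < u₂ z then 1 else 0)
    (hρ : ∀ z ξ, ρ z ξ = (ρ₁ z ξ + ρ₂ z ξ) / 2) :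
    ∀ z : X, (∫ ξ : ℝ, (ρ z ξ - (ρ z ξ) ^ 2)) = (1 / 4) * |u₁ z - u₂ z| := by
  intro z
  have hdefect : ∀ ξ, ρ z ξ - ρ z ξ ^ 2 = |kinetic (u₁ z) ξ - kinetic (u₂ z) ξ| / 4 := by
    intro ξ
    rw [hρ, hρ₁, hρ₂]
    exact half_add_sub_sq_half_add (kinetic_mem_zero_one _ _) (kinetic_mem_zero_one _ _)
  simp_rw [hdefect]
  rw [integral_div, integral_abs_kinetic_sub_kinetic]
  ring

/-- for `ρ = (ρ₁ + ρ₂)/2` with `ρᵢ(z,ξ) = 𝟙_{uᵢ(z) > ξ}`,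
`∫_ℝ (ρ - ρ²) dξ = |u₁(z) - u₂(z)|/4` for every `z`. -/
theorem kinetic_average_defect
    {X : Type*} [MeasurableSpace X] (μ : Measure X) [IsFiniteMeasure μ]
    (u₁ u₂ : X → ℝ) (hu₁ : Measurable u₁) (hu₂ : Measurable u₂)
    (ρ₁ ρ₂ ρ : X → ℝ → ℝ)
    (hρ₁ : ∀ z ξ, ρ₁ z ξ = if ξ < u₁ z then 1 else 0)
    (hρ₂ : ∀ z ξ, ρ₂ z ξ = if ξ < u₂ z then 1 else 0)
    (hρ : ∀ z ξ, ρ z ξ = (ρ₁ z ξ + ρ₂ z ξ) / 2) :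
    ∀ z : X, (∫ ξ : ℝ, (ρ z ξ - (ρ z ξ) ^ 2)) = (1 / 4) * |u₁ z - u₂ z| :=
  kinetic_average_defect_general u₁ u₂ ρ₁ ρ₂ ρ hρ₁ hρ₂ hρ
end

section
/- Fix p > 2, m ∈ ℕ, and define S_m : ℝ → ℝ by S_m(ξ) = |ξ|^p for |ξ| ≤ m, and S_m(ξ) = m^{p−2}·[ (p(p−1)/2)ξ² − p(p−2)m|ξ| + ((p−1)(p−2)/2)m² ] for |ξ| > m. Then S_m is C², and for all ξ ∈ ℝ: (i) |ξ S_m'(ξ)| ≤ p S_m(ξ); (ii) |S_m'(ξ)| ≤ p(1 + S_m(ξ)); (iii) |S_m'(ξ)| ≤ |ξ| S_m''(ξ); (iv) ξ² S_m''(ξ) ≤ p(p−1) S_m(ξ); (v) S_m''(ξ) ≤ p(p−1)(1 + S_m(ξ)). -/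
/-!
On `[-m, m]` the function `S_m` is `|ξ| ^ p`, and beyond `±m` it is the second-order Taylor
polynomial of `|ξ| ^ p` at `±m`. Its derivatives are therefore the corresponding Taylor
continuations of the derivatives of `|ξ| ^ p`; in particular `S_m''(ξ) = p (p - 1) |c| ^ (p - 2)`,
with `c` the projection of `ξ` onto `[-m, m]`, is continuous. Writing `ξ = c + s`, where
`c s ≥ 0`, and `u = |c| ^ (p - 2)`, we get `S_m = u (c² + p c s + p (p - 1) s² / 2)`,
`S_m' = p u (c + (p - 1) s)` and `S_m'' = p (p - 1) u`, so (i), (iii), (iv) become polynomial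
inequalities in `c` and `s` whose differences have nonnegative coefficients when `p ≥ 2`.
Inequalities (ii) and (v) follow from (i) and (iv) when `|ξ| ≥ 1`, and are immediate on
`[-1, 1] ⊆ [-m, m]`.
-/

open Set

section Gluing

variable {f f' : ℝ → ℝ} {a b : ℝ}

lemma hasDerivAt_of_hasDerivWithinAt_Iic_Icc_Ici (hab : a ≤ b)
    (hl : ∀ x ≤ a, HasDerivWithinAt f (f' x) (Iic a) x)
    (hm : ∀ x ∈ Icc a b, HasDerivWithinAt f (f' x) (Icc a b) x)
    (hr : ∀ x, b ≤ x → HasDerivWithinAt f (f' x) (Ici b) x) (x : ℝ) :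
    HasDerivAt f (f' x) x := by
  have closed_piece (s : Set ℝ) (hs : IsClosed s)
      (h : x ∈ s → HasDerivWithinAt f (f' x) s x) : HasDerivWithinAt f (f' x) s x := by
    by_cases hx : x ∈ s
    · exact h hx
    · exact HasFDerivWithinAt.of_notMem_closure (by rwa [hs.closure_eq])
  have hcover : Iic a ∪ Icc a b ∪ Ici b = univ := by
    rw [Iic_union_Icc_eq_Iic hab, Iic_union_Ici]
  have := ((closed_piece _ isClosed_Iic (hl x)).union (closed_piece _ isClosed_Icc (hm x))).union
    (closed_piece _ isClosed_Ici (hr x))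
  rwa [hcover, hasDerivWithinAt_univ] at this

end Gluing

def clamp (a b x : ℝ) : ℝ := max a (min x b)

section Clamp

variable {a b x : ℝ}

lemma clamp_of_le_left (hx : x ≤ a) : clamp a b x = a :=
  max_eq_left (min_le_of_left_le hx)

lemma clamp_of_mem (hx : x ∈ Icc a b) : clamp a b x = x := by
  rw [clamp, min_eq_left hx.2, max_eq_right hx.1]

lemma clamp_of_right_le (hab : a ≤ b) (hx : b ≤ x) : clamp a b x = b := by
  rw [clamp, min_eq_right hx, max_eq_right hab]

lemma continuous_clamp : Continuous (clamp a b) := by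
  unfold clamp; fun_prop

lemma clamp_mul_sub_clamp_nonneg (ha : a ≤ 0) (hb : 0 ≤ b) (x : ℝ) :
    0 ≤ clamp a b x * (x - clamp a b x) := by
  rcases le_total x a with hx | hx
  · rw [clamp_of_le_left hx]; nlinarith
  rcases le_total x b with hx' | hx'
  · rw [clamp_of_mem ⟨hx, hx'⟩]; simp
  · rw [clamp_of_right_le (ha.trans hb) hx']; nlinarith

end Clamp

/-- `f` on `[a, b]`, continued beyond each endpoint by its second-order Taylor polynomial there,
`f'` and `f''` standing for the derivatives. -/
noncomputable def taylorExtend (a b : ℝ) (f f' f'' : ℝ → ℝ) (x : ℝ) : ℝ :=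
  f (clamp a b x) + f' (clamp a b x) * (x - clamp a b x)
    + f'' (clamp a b x) / 2 * (x - clamp a b x) ^ 2

section TaylorExtend

variable {a b : ℝ} {f f' f'' : ℝ → ℝ}

lemma taylorExtend_zero_zero : taylorExtend a b f 0 0 = f ∘ clamp a b := by
  ext x; simp [taylorExtend]

lemma hasDerivAt_taylorQuadratic (y v v' v'' x : ℝ) :
    HasDerivAt (fun x => v + v' * (x - y) + v'' / 2 * (x - y) ^ 2) (v' + v'' * (x - y)) x := by
  have hxy : HasDerivAt (fun x => x - y) 1 x := (hasDerivAt_id' x).sub_const y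
  refine (((hxy.const_mul v').const_add v).add ((hxy.pow 2).const_mul (v'' / 2))).congr_deriv ?_
  push_cast; ring

lemma hasDerivAt_taylorExtend (hab : a ≤ b)
    (hf : ∀ x ∈ Icc a b, HasDerivWithinAt f (f' x) (Icc a b) x) (x : ℝ) :
    HasDerivAt (taylorExtend a b f f' f'') (taylorExtend a b f' f'' 0 x) x := by
  refine hasDerivAt_of_hasDerivWithinAt_Iic_Icc_Ici hab (fun y hy => ?_) (fun y hy => ?_)
    (fun y hy => ?_) x
  · have := (hasDerivAt_taylorQuadratic a (f a) (f' a) (f'' a) y).hasDerivWithinAt (s := Iic a)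
    refine (this.congr_of_mem (fun z hz => ?_) hy).congr_deriv ?_
    · simp [taylorExtend, clamp_of_le_left hz]
    · simp [taylorExtend, clamp_of_le_left hy]
  · refine ((hf y hy).congr_of_mem (fun z hz => ?_) hy).congr_deriv ?_
    · simp [taylorExtend, clamp_of_mem hz]
    · simp [taylorExtend, clamp_of_mem hy]
  · have := (hasDerivAt_taylorQuadratic b (f b) (f' b) (f'' b) y).hasDerivWithinAt (s := Ici b)
    refine (this.congr_of_mem (fun z hz => ?_) hy).congr_deriv ?_
    · simp [taylorExtend, clamp_of_right_le hab hz]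
    · simp [taylorExtend, clamp_of_right_le hab hy]

end TaylorExtend

lemma contDiff_two_of_hasDerivAt {f f' f'' : ℝ → ℝ} (hf : ∀ x, HasDerivAt f (f' x) x)
    (hf' : ∀ x, HasDerivAt f' (f'' x) x) (hf'' : Continuous f'') : ContDiff ℝ 2 f := by
  rw [show (2 : WithTop ℕ∞) = 1 + 1 from rfl, contDiff_succ_iff_deriv]
  refine ⟨fun x => (hf x).differentiableAt, fun h => by simp at h, ?_⟩
  rw [deriv_eq hf]
  refine contDiff_one_iff_deriv.2 ⟨fun x => (hf' x).differentiableAt, ?_⟩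
  rwa [deriv_eq hf']

section AbsRpow

variable {p : ℝ}

lemma abs_rpow_eq_abs_rpow_sub_two_mul_sq (hp : p ≠ 0) (x : ℝ) :
    |x| ^ p = |x| ^ (p - 2) * x ^ 2 := by
  rw [← sq_abs, ← Real.rpow_natCast, ← Real.rpow_add' (abs_nonneg x) (by simpa using hp)]
  norm_num

lemma hasDerivAt_abs_rpow_sub_two_mul_self (hp : 2 ≤ p) (x : ℝ) :
    HasDerivAt (fun x : ℝ => |x| ^ (p - 2) * x) ((p - 1) * |x| ^ (p - 2)) x := by
  have hp0 : p ≠ 0 := by positivity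
  have hcont : Continuous fun x : ℝ => |x| ^ (p - 2) :=
    continuous_abs.rpow_const fun _ => Or.inr (by linarith)
  refine hasDerivAt_of_hasDerivAt_of_ne' (x := 0) (fun y hy => ?_)
    (hcont.mul continuous_id).continuousAt (continuous_const.mul hcont).continuousAt x
  -- away from `0`, `|x| ^ (p - 2) * x = |x| ^ p / x`
  have hquot := (hasDerivAt_abs_rpow y (by linarith : 1 < p)).div (hasDerivAt_id y) hy
  refine (hquot.congr_of_eventuallyEq (Filter.Eventually.of_forall fun z => ?_)).congr_deriv ?_
  · rcases eq_or_ne z 0 with rfl | hz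
    · simp
    · simp only [Pi.div_apply, Pi.mul_apply, id, abs_rpow_eq_abs_rpow_sub_two_mul_sq hp0 z]
      field_simp
  · simp only [id, Pi.mul_apply]
    rw [abs_rpow_eq_abs_rpow_sub_two_mul_sq hp0]
    field_simp

end AbsRpow

noncomputable def truncPow (p M : ℝ) : ℝ → ℝ :=
  taylorExtend (-M) M (fun x => |x| ^ p) (fun x => p * |x| ^ (p - 2) * x)
    (fun x => p * (p - 1) * |x| ^ (p - 2))

section TruncPow

variable {p M : ℝ}

lemma truncPow_eq_ite (hp : p ≠ 0) (hM : 0 ≤ M) (ξ : ℝ) :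
    truncPow p M ξ = if |ξ| ≤ M then |ξ| ^ p
      else M ^ (p - 2) * ((p * (p - 1) / 2) * ξ ^ 2 - p * (p - 2) * M * |ξ|
        + ((p - 1) * (p - 2) / 2) * M ^ 2) := by
  have hMp : M ^ p = M ^ (p - 2) * M ^ 2 := by
    simpa [abs_of_nonneg hM] using abs_rpow_eq_abs_rpow_sub_two_mul_sq hp M
  split_ifs with hξ
  · simp [truncPow, taylorExtend, clamp_of_mem (abs_le.1 hξ)]
  rcases le_or_gt 0 ξ with h0 | h0
  · rw [abs_of_nonneg h0] at hξ ⊢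
    simp only [truncPow, taylorExtend, clamp_of_right_le (a := -M) (by linarith) (not_le.1 hξ).le,
      abs_of_nonneg hM, hMp]
    ring
  · rw [abs_of_neg h0] at hξ ⊢
    simp only [truncPow, taylorExtend, clamp_of_le_left (by linarith : ξ ≤ -M), abs_neg,
      abs_of_nonneg hM, hMp]
    ring

lemma hasDerivAt_truncPow (hp : 1 < p) (hM : 0 ≤ M) (ξ : ℝ) :
    HasDerivAt (truncPow p M) (taylorExtend (-M) M (fun x => p * |x| ^ (p - 2) * x)
      (fun x => p * (p - 1) * |x| ^ (p - 2)) 0 ξ) ξ :=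
  hasDerivAt_taylorExtend (a := -M) (by linarith)
    (fun x _ => (hasDerivAt_abs_rpow x hp).hasDerivWithinAt) ξ

lemma hasDerivAt_deriv_truncPow (hp : 2 ≤ p) (hM : 0 ≤ M) (ξ : ℝ) :
    HasDerivAt (taylorExtend (-M) M (fun x => p * |x| ^ (p - 2) * x)
      (fun x => p * (p - 1) * |x| ^ (p - 2)) 0) (p * (p - 1) * |clamp (-M) M ξ| ^ (p - 2)) ξ := by
  have hf' (x : ℝ) :
      HasDerivAt (fun x => p * |x| ^ (p - 2) * x) (p * (p - 1) * |x| ^ (p - 2)) x := by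
    simpa only [mul_assoc] using (hasDerivAt_abs_rpow_sub_two_mul_self hp x).const_mul p
  simpa [taylorExtend_zero_zero] using hasDerivAt_taylorExtend (a := -M) (b := M) (f'' := 0)
    (by linarith) (fun x _ => (hf' x).hasDerivWithinAt) ξ

lemma deriv_truncPow (hp : 1 < p) (hM : 0 ≤ M) :
    deriv (truncPow p M) = taylorExtend (-M) M (fun x => p * |x| ^ (p - 2) * x)
      (fun x => p * (p - 1) * |x| ^ (p - 2)) 0 :=
  deriv_eq (hasDerivAt_truncPow hp hM)

lemma deriv_deriv_truncPow (hp : 2 ≤ p) (hM : 0 ≤ M) :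
    deriv (deriv (truncPow p M)) = fun ξ => p * (p - 1) * |clamp (-M) M ξ| ^ (p - 2) := by
  rw [deriv_truncPow (by linarith) hM]
  exact deriv_eq (hasDerivAt_deriv_truncPow hp hM)

lemma contDiff_truncPow (hp : 2 ≤ p) (hM : 0 ≤ M) : ContDiff ℝ 2 (truncPow p M) :=
  contDiff_two_of_hasDerivAt (hasDerivAt_truncPow (by linarith) hM)
    (hasDerivAt_deriv_truncPow hp hM) <| continuous_const.mul <|
      (continuous_abs.comp continuous_clamp).rpow_const fun _ => Or.inr (by linarith)

lemma truncPow_taylor_form (hp : 2 ≤ p) (hM : 0 ≤ M) (ξ : ℝ) :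
    ∃ y s, 0 ≤ y * s ∧ ξ = y + s ∧ (|ξ| ≤ M → s = 0) ∧
      truncPow p M ξ = |y| ^ (p - 2) * (y ^ 2 + p * y * s + p * (p - 1) / 2 * s ^ 2) ∧
      deriv (truncPow p M) ξ = p * |y| ^ (p - 2) * (y + (p - 1) * s) ∧
      deriv (deriv (truncPow p M)) ξ = p * (p - 1) * |y| ^ (p - 2) := by
  refine ⟨clamp (-M) M ξ, ξ - clamp (-M) M ξ, clamp_mul_sub_clamp_nonneg (by linarith) hM ξ,
    by ring, fun h => by rw [clamp_of_mem (abs_le.1 h), sub_self], ?_, ?_, ?_⟩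
  · simp only [truncPow, taylorExtend,
      abs_rpow_eq_abs_rpow_sub_two_mul_sq (by positivity : p ≠ 0)]
    ring
  · simp only [deriv_truncPow (by linarith : 1 < p) hM, taylorExtend, Pi.zero_apply]
    ring
  · rw [deriv_deriv_truncPow hp hM]

lemma abs_mul_deriv_truncPow_le (hp : 2 ≤ p) (hM : 0 ≤ M) (ξ : ℝ) :
    |ξ * deriv (truncPow p M) ξ| ≤ p * truncPow p M ξ := by
  obtain ⟨y, s, hys, rfl, -, hS, hS', -⟩ := truncPow_taylor_form hp hM ξ
  have hu : 0 ≤ |y| ^ (p - 2) := by positivity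
  have hprod : (y + s) * deriv (truncPow p M) (y + s) =
      p * |y| ^ (p - 2) * (y ^ 2 + p * (y * s) + (p - 1) * s ^ 2) := by
    rw [hS']; ring
  have hgap : p * truncPow p M (y + s) - (y + s) * deriv (truncPow p M) (y + s) =
      p * ((p - 1) * (p - 2) / 2 * (|y| ^ (p - 2) * s ^ 2)) := by
    rw [hS, hS']; ring
  have hq : 0 ≤ y ^ 2 + p * (y * s) + (p - 1) * s ^ 2 := by nlinarith [sq_nonneg y, sq_nonneg s]
  rw [abs_of_nonneg (hprod ▸ mul_nonneg (by positivity) hq)]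
  nlinarith [hgap, mul_nonneg (mul_nonneg (by linarith : 0 ≤ p - 1) (by linarith : 0 ≤ p - 2))
    (mul_nonneg hu (sq_nonneg s))]

lemma abs_deriv_truncPow_le_abs_mul_deriv_deriv (hp : 2 ≤ p) (hM : 0 ≤ M) (ξ : ℝ) :
    |deriv (truncPow p M) ξ| ≤ |ξ| * deriv (deriv (truncPow p M)) ξ := by
  obtain ⟨y, s, hys, rfl, -, -, hS', hS''⟩ := truncPow_taylor_form hp hM ξ
  have hu : 0 ≤ |y| ^ (p - 2) := by positivity
  have hS''_nonneg : 0 ≤ p * (p - 1) * |y| ^ (p - 2) :=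
    mul_nonneg (mul_nonneg (by linarith) (by linarith)) hu
  have hgap : ((y + s) * (p * (p - 1) * |y| ^ (p - 2))) ^ 2
      - (p * |y| ^ (p - 2) * (y + (p - 1) * s)) ^ 2
      = (p * |y| ^ (p - 2)) ^ 2 * ((p - 2) * (p * y ^ 2 + 2 * (p - 1) * (y * s))) := by
    ring
  rw [hS', hS'', ← abs_of_nonneg hS''_nonneg, ← abs_mul]
  refine sq_le_sq.1 (sub_nonneg.1 (hgap ▸ mul_nonneg (sq_nonneg _) ?_))
  exact mul_nonneg (by linarith) (by nlinarith [sq_nonneg y])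

lemma sq_mul_deriv_deriv_truncPow_le (hp : 2 ≤ p) (hM : 0 ≤ M) (ξ : ℝ) :
    ξ ^ 2 * deriv (deriv (truncPow p M)) ξ ≤ p * (p - 1) * truncPow p M ξ := by
  obtain ⟨y, s, hys, rfl, -, hS, -, hS''⟩ := truncPow_taylor_form hp hM ξ
  have hu : 0 ≤ |y| ^ (p - 2) := by positivity
  have hgap : p * (p - 1) * truncPow p M (y + s)
      - (y + s) ^ 2 * deriv (deriv (truncPow p M)) (y + s)
      = p * (p - 1) * (p - 2) * (|y| ^ (p - 2) * (y * s + (p + 1) / 2 * s ^ 2)) := by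
    rw [hS, hS'']; ring
  have hc : 0 ≤ p * (p - 1) * (p - 2) := by
    have := mul_nonneg (by linarith : 0 ≤ p - 1) (by linarith : 0 ≤ p - 2); nlinarith
  have hq : 0 ≤ y * s + (p + 1) / 2 * s ^ 2 := by nlinarith [sq_nonneg s]
  nlinarith [hgap, mul_nonneg hc (mul_nonneg hu hq)]

lemma truncPow_nonneg (hp : 2 ≤ p) (hM : 0 ≤ M) (ξ : ℝ) : 0 ≤ truncPow p M ξ :=
  nonneg_of_mul_nonneg_right ((abs_nonneg _).trans (abs_mul_deriv_truncPow_le hp hM ξ))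
    (by linarith)

lemma abs_deriv_truncPow_le (hp : 2 ≤ p) (hM : 1 ≤ M) (ξ : ℝ) :
    |deriv (truncPow p M) ξ| ≤ p * (1 + truncPow p M ξ) := by
  have hS := truncPow_nonneg hp (by linarith : 0 ≤ M) ξ
  rcases le_total 1 |ξ| with hξ | hξ
  · calc |deriv (truncPow p M) ξ| ≤ |ξ| * |deriv (truncPow p M) ξ| :=
          le_mul_of_one_le_left (abs_nonneg _) hξ
      _ = |ξ * deriv (truncPow p M) ξ| := (abs_mul _ _).symm
      _ ≤ p * truncPow p M ξ := abs_mul_deriv_truncPow_le hp (by linarith) ξ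
      _ ≤ p * (1 + truncPow p M ξ) := by nlinarith
  · obtain ⟨y, s, -, rfl, hs, -, hS', -⟩ := truncPow_taylor_form hp (by linarith : 0 ≤ M) ξ
    obtain rfl := hs (hξ.trans hM)
    simp only [add_zero, mul_zero] at hξ hS hS' ⊢
    have hu : |y| ^ (p - 2) ≤ 1 := Real.rpow_le_one (abs_nonneg y) hξ (by linarith)
    rw [hS', abs_mul, abs_mul, abs_of_nonneg (by linarith : 0 ≤ p),
      abs_of_nonneg (by positivity : 0 ≤ |y| ^ (p - 2))]
    nlinarith [mul_le_one₀ hu (abs_nonneg y) hξ]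

lemma deriv_deriv_truncPow_le (hp : 2 ≤ p) (hM : 1 ≤ M) (ξ : ℝ) :
    deriv (deriv (truncPow p M)) ξ ≤ p * (p - 1) * (1 + truncPow p M ξ) := by
  have hS := truncPow_nonneg hp (by linarith : 0 ≤ M) ξ
  have hpp : 0 ≤ p * (p - 1) := mul_nonneg (by linarith) (by linarith)
  rcases le_total 1 |ξ| with hξ | hξ
  · calc deriv (deriv (truncPow p M)) ξ ≤ ξ ^ 2 * deriv (deriv (truncPow p M)) ξ := by
          refine le_mul_of_one_le_left ?_ (by nlinarith [sq_abs ξ])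
          rw [deriv_deriv_truncPow hp (by linarith)]
          exact mul_nonneg hpp (by positivity)
      _ ≤ p * (p - 1) * truncPow p M ξ := sq_mul_deriv_deriv_truncPow_le hp (by linarith) ξ
      _ ≤ p * (p - 1) * (1 + truncPow p M ξ) := by nlinarith
  · obtain ⟨y, s, -, rfl, hs, -, -, hS''⟩ := truncPow_taylor_form hp (by linarith : 0 ≤ M) ξ
    obtain rfl := hs (hξ.trans hM)
    simp only [add_zero] at hξ hS hS'' ⊢
    rw [hS'']
    nlinarith [Real.rpow_le_one (abs_nonneg y) hξ (by linarith : 0 ≤ p - 2)]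

end TruncPow

/-- the truncation `S_m` of `|ξ|^p` is `C²` and satisfies the five
elementary inequalities. Here `S' = deriv S` and `S'' = deriv (deriv S)`. -/
theorem truncation_Sm_properties
    (p : ℝ) (hp : 2 < p) (m : ℕ) (hm : 1 ≤ m)
    (S : ℝ → ℝ)
    (hS : ∀ ξ : ℝ, S ξ =
      if |ξ| ≤ (m : ℝ) then |ξ| ^ p
      else (m : ℝ) ^ (p - 2) *
        ((p * (p - 1) / 2) * ξ ^ 2 - p * (p - 2) * m * |ξ|
          + ((p - 1) * (p - 2) / 2) * (m : ℝ) ^ 2)) :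
    ContDiff ℝ 2 S ∧
    (∀ ξ : ℝ, |ξ * deriv S ξ| ≤ p * S ξ) ∧
    (∀ ξ : ℝ, |deriv S ξ| ≤ p * (1 + S ξ)) ∧
    (∀ ξ : ℝ, |deriv S ξ| ≤ |ξ| * deriv (deriv S) ξ) ∧
    (∀ ξ : ℝ, ξ ^ 2 * deriv (deriv S) ξ ≤ p * (p - 1) * S ξ) ∧
    (∀ ξ : ℝ, deriv (deriv S) ξ ≤ p * (p - 1) * (1 + S ξ)) := by
  have hm1 : (1 : ℝ) ≤ m := by exact_mod_cast hm
  have hm0 : (0 : ℝ) ≤ m := by linarith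
  obtain rfl : S = truncPow p m :=
    funext fun ξ => (hS ξ).trans (truncPow_eq_ite (by linarith) hm0 ξ).symm
  exact ⟨contDiff_truncPow hp.le hm0, abs_mul_deriv_truncPow_le hp.le hm0,
    abs_deriv_truncPow_le hp.le hm1, abs_deriv_truncPow_le_abs_mul_deriv_deriv hp.le hm0,
    sq_mul_deriv_deriv_truncPow_le hp.le hm0, deriv_deriv_truncPow_le hp.le hm1⟩
end
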